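/- arXiv:2105.14812 — 2 statements merged into one kernel-verified Lean document; each statement's English description precedes it below -/
import Mathlib

section
/- For parameters θ̃, θ̂ ∈ P and indices i, j, let u_{i,θ̃}(s) = B(θ̃)ᵀ e^{A(θ̃)ᵀ(T−s)} e_i (standard basis vector e_i). Then ⟨R u_{i,θ̃}, R u_{j,θ̂}⟩_{Im R} = ⟨e_i, Q(θ̃,θ̂) e_j⟩_{ℝⁿ} = ⟨u_{i,θ̃}, u_{j,θ̂}⟩_{L²([0,T],ℝᵐ)}. Consequently R restricted to the closed span U of all such functions u_{i,θ} is an isometric isomorphism onto Im R. -/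
open MeasureTheory Matrix Set NormedSpace Filter
open scoped RealInnerProductSpace
noncomputable section

/-- Lebesgue measure restricted to `[0,T]`. -/
def muT (T : ℝ) : Measure ℝ := MeasureTheory.volume.restrict (Set.Icc (0:ℝ) T)

/-- The space `L²([0,T], ℝᵐ)`. -/
abbrev L2 (m : ℕ) (T : ℝ) := MeasureTheory.Lp (EuclideanSpace ℝ (Fin m)) 2 (muT T)

/-- Single-parameter reachability map `u ↦ ∫₀ᵀ e^{A(T-s)} B u(s) ds`. -/
def RopK {n m : ℕ} (T : ℝ) (A : Matrix (Fin n) (Fin n) ℝ) (B : Matrix (Fin n) (Fin m) ℝ)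
    (u : L2 m T) : EuclideanSpace ℝ (Fin n) :=
  ∫ s in Set.Icc (0:ℝ) T, WithLp.toLp 2 (((NormedSpace.exp ((T - s) • A)) * B).mulVec (u s))

/-- The adjoint kernel `s ↦ Bᵀ e^{Aᵀ(T-s)} v`. -/
def RadjK {n m : ℕ} (T : ℝ) (A : Matrix (Fin n) (Fin n) ℝ) (B : Matrix (Fin n) (Fin m) ℝ)
    (v : EuclideanSpace ℝ (Fin n)) (s : ℝ) : EuclideanSpace ℝ (Fin m) :=
  WithLp.toLp 2 ((Bᵀ * NormedSpace.exp ((T - s) • Aᵀ)).mulVec v)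

/-- Parametrized reachability operator `(Ru)(θ)`. -/
def RopFam {n m : ℕ} (T : ℝ) (A : ℝ → Matrix (Fin n) (Fin n) ℝ)
    (B : ℝ → Matrix (Fin n) (Fin m) ℝ) (u : L2 m T) (θ : ℝ) : EuclideanSpace ℝ (Fin n) :=
  RopK T (A θ) (B θ) u

/-- The reproducing kernel `Q(θ, θ')`. -/
def Qfun {n m : ℕ} (T : ℝ) (A : ℝ → Matrix (Fin n) (Fin n) ℝ)
    (B : ℝ → Matrix (Fin n) (Fin m) ℝ) (θ θ' : ℝ) : Matrix (Fin n) (Fin n) ℝ :=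
  Matrix.of fun i j => ∫ s in Set.Icc (0:ℝ) T,
    (NormedSpace.exp ((T - s) • A θ) * B θ * (B θ')ᵀ * NormedSpace.exp ((T - s) • (A θ')ᵀ)) i j

/-- Controllability Gramian of `(A,B)` on `[0,T]`. -/
def Gram {n m : ℕ} (T : ℝ) (A : Matrix (Fin n) (Fin n) ℝ) (B : Matrix (Fin n) (Fin m) ℝ) :
    Matrix (Fin n) (Fin n) ℝ :=
  Matrix.of fun i j => ∫ s in Set.Icc (0:ℝ) T,
    ((NormedSpace.exp ((T - s) • A)) * B * Bᵀ * (NormedSpace.exp ((T - s) • Aᵀ))) i j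

/-- The closed span `U` of the functions `s ↦ B(θ)ᵀ e^{A(θ)ᵀ(T−s)} eᵢ`, `θ ∈ P`. -/
def Uspan {n m : ℕ} (T θm θp : ℝ) (A : ℝ → Matrix (Fin n) (Fin n) ℝ)
    (B : ℝ → Matrix (Fin n) (Fin m) ℝ) : Set (L2 m T) :=
  closure (Submodule.span ℝ {w : L2 m T | ∃ θ ∈ Set.Icc θm θp, ∃ i : Fin n,
    ∀ᵐ s ∂(muT T), w s = RadjK T (A θ) (B θ) (EuclideanSpace.single i 1) s} : Set (L2 m T))

/-!
The functions `u_{i,θ}` represent the coordinates of `R`: `⟪u_{i,θ}, g⟫_{L²} = (R g)(θ)ᵢ`.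
Hence if `R w = R u` on `P`, then `w - u` is orthogonal to every `u_{i,θ}`, so to their closed
span `U`; for `u ∈ U` Pythagoras gives `‖w‖² = ‖u‖² + ‖w - u‖²`, so `u` is the unique
minimal-norm preimage of `R u`. In particular the minimal-norm solutions `w₁, w₂` are
`u_{i,θ̃}, u_{j,θ̂}` themselves, and the pointwise inner product of these two is the integrand
of `Q(θ̃, θ̂)ᵢⱼ`.
-/

instance (T : ℝ) : IsFiniteMeasure (muT T) := by
  unfold muT; infer_instance

section Orthogonality

variable {E : Type*} [NormedAddCommGroup E] [InnerProductSpace ℝ E]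

theorem inner_eq_zero_of_mem_closure_span {S : Set E} {d x : E} (hS : ∀ y ∈ S, ⟪y, d⟫ = 0)
    (hx : x ∈ closure (Submodule.span ℝ S : Set E)) : ⟪x, d⟫ = 0 := by
  refine Submodule.mem_orthogonal_singleton_iff_inner_left.1 <|
    closure_minimal ?_ (Submodule.span ℝ {d}).isClosed_orthogonal hx
  exact Submodule.span_le.2 fun y hy =>
    Submodule.mem_orthogonal_singleton_iff_inner_left.2 (hS y hy)

theorem norm_sq_eq_add_norm_sub_sq_of_inner_sub_eq_zero {u w : E} (h : ⟪u, w - u⟫ = 0) :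
    ‖w‖ ^ 2 = ‖u‖ ^ 2 + ‖w - u‖ ^ 2 := by
  simpa [sq] using norm_add_sq_eq_norm_sq_add_norm_sq_real h

theorem norm_le_norm_of_inner_sub_eq_zero {u w : E} (h : ⟪u, w - u⟫ = 0) : ‖u‖ ≤ ‖w‖ := by
  have := norm_sq_eq_add_norm_sub_sq_of_inner_sub_eq_zero h
  nlinarith [norm_nonneg u, norm_nonneg w, sq_nonneg ‖w - u‖]

theorem eq_of_inner_sub_eq_zero_of_norm_le {u w : E} (h : ⟪u, w - u⟫ = 0) (hw : ‖w‖ ≤ ‖u‖) :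
    w = u := by
  have := norm_sq_eq_add_norm_sub_sq_of_inner_sub_eq_zero h
  have : ‖w - u‖ ^ 2 = 0 := by nlinarith [norm_nonneg u, norm_nonneg w, sq_nonneg ‖w - u‖]
  simpa [sub_eq_zero] using this

end Orthogonality

theorem Matrix.continuous_exp {n : ℕ} :
    Continuous (NormedSpace.exp : Matrix (Fin n) (Fin n) ℝ → Matrix (Fin n) (Fin n) ℝ) := by
  -- any normed-algebra structure inducing the product topology will do
  let : NormedRing (Matrix (Fin n) (Fin n) ℝ) := Matrix.linftyOpNormedRing
  let : NormedAlgebra ℝ (Matrix (Fin n) (Fin n) ℝ) := Matrix.linftyOpNormedAlgebra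
  let : NormedAlgebra ℚ (Matrix (Fin n) (Fin n) ℝ) := NormedAlgebra.restrictScalars ℚ ℝ _
  exact exp_continuous

section Reachability

variable {n m : ℕ}

theorem RadjK_eq_transpose_mulVec (T : ℝ) (A : Matrix (Fin n) (Fin n) ℝ)
    (B : Matrix (Fin n) (Fin m) ℝ) (v : EuclideanSpace ℝ (Fin n)) (s : ℝ) :
    RadjK T A B v s = WithLp.toLp 2 ((exp ((T - s) • A) * B)ᵀ *ᵥ v) := by
  rw [RadjK, transpose_mul, ← Matrix.exp_transpose, transpose_smul]

theorem inner_RadjK (T : ℝ) (A : Matrix (Fin n) (Fin n) ℝ) (B : Matrix (Fin n) (Fin m) ℝ)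
    (v : EuclideanSpace ℝ (Fin n)) (s : ℝ) (x : EuclideanSpace ℝ (Fin m)) :
    ⟪RadjK T A B v s, x⟫ = ⟪v, WithLp.toLp 2 ((exp ((T - s) • A) * B) *ᵥ x)⟫ := by
  simp only [RadjK_eq_transpose_mulVec, EuclideanSpace.inner_eq_star_dotProduct, star_trivial]
  rw [dotProduct_mulVec, vecMul_transpose, dotProduct_comm]

theorem inner_RadjK_single (T : ℝ) (A : Matrix (Fin n) (Fin n) ℝ) (B : Matrix (Fin n) (Fin m) ℝ)
    (i : Fin n) (s : ℝ) (x : EuclideanSpace ℝ (Fin m)) :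
    ⟪RadjK T A B (EuclideanSpace.single i 1) s, x⟫ = ((exp ((T - s) • A) * B) *ᵥ x) i := by
  rw [inner_RadjK, EuclideanSpace.inner_single_left]
  simp

theorem inner_RadjK_single_RadjK_single (T : ℝ) (A A' : Matrix (Fin n) (Fin n) ℝ)
    (B B' : Matrix (Fin n) (Fin m) ℝ) (i j : Fin n) (s : ℝ) :
    ⟪RadjK T A B (EuclideanSpace.single i 1) s, RadjK T A' B' (EuclideanSpace.single j 1) s⟫ =
      (exp ((T - s) • A) * B * B'ᵀ * exp ((T - s) • A'ᵀ)) i j := by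
  rw [inner_RadjK_single, RadjK_eq_transpose_mulVec, WithLp.ofLp_toLp, mulVec_mulVec,
    PiLp.ofLp_single, mulVec_single_one, col_apply, transpose_mul, ← Matrix.exp_transpose,
    transpose_smul]
  simp only [Matrix.mul_assoc]

theorem integrable_exp_mul_mulVec_apply (T : ℝ) (A : Matrix (Fin n) (Fin n) ℝ)
    (B : Matrix (Fin n) (Fin m) ℝ) (g : L2 m T) (i : Fin n) :
    Integrable (fun s => ((exp ((T - s) • A) * B) *ᵥ g s) i) (muT T) := by
  simp only [mulVec, dotProduct]
  refine integrable_finsetSum _ fun k _ => ?_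
  have hg : Integrable (fun s => g s k) (muT T) :=
    ((Lp.memLp g).integrable one_le_two).eval_piLp k
  have hM : Continuous fun s => (exp ((T - s) • A) * B) i k :=
    (continuous_apply k).comp <| (continuous_apply i).comp <|
      (Matrix.continuous_exp.comp (by fun_prop)).matrix_mul continuous_const
  obtain ⟨C, hC⟩ := isCompact_Icc.exists_bound_of_continuousOn hM.continuousOn
  exact hg.bdd_mul hM.aestronglyMeasurable
    ((ae_restrict_mem measurableSet_Icc).mono fun s hs => hC s hs)

theorem RopK_apply (T : ℝ) (A : Matrix (Fin n) (Fin n) ℝ) (B : Matrix (Fin n) (Fin m) ℝ)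
    (g : L2 m T) (i : Fin n) :
    RopK T A B g i = ∫ s, ((exp ((T - s) • A) * B) *ᵥ g s) i ∂(muT T) :=
  eval_integral_piLp (fun i => integrable_exp_mul_mulVec_apply T A B g i) i

theorem inner_eq_RopK_apply {T : ℝ} {A : Matrix (Fin n) (Fin n) ℝ} {B : Matrix (Fin n) (Fin m) ℝ}
    {i : Fin n} {v : L2 m T} (hv : ∀ᵐ s ∂(muT T), v s = RadjK T A B (EuclideanSpace.single i 1) s)
    (g : L2 m T) : ⟪v, g⟫ = RopK T A B g i := by
  rw [RopK_apply, L2.inner_def]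
  refine integral_congr_ae ?_
  filter_upwards [hv] with s hs
  rw [hs, inner_RadjK_single]

theorem inner_eq_Qfun_apply {T : ℝ} {A : ℝ → Matrix (Fin n) (Fin n) ℝ}
    {B : ℝ → Matrix (Fin n) (Fin m) ℝ} {θ θ' : ℝ} {i j : Fin n} {u u' : L2 m T}
    (hu : ∀ᵐ s ∂(muT T), u s = RadjK T (A θ) (B θ) (EuclideanSpace.single i 1) s)
    (hu' : ∀ᵐ s ∂(muT T), u' s = RadjK T (A θ') (B θ') (EuclideanSpace.single j 1) s) :
    ⟪u, u'⟫ = Qfun T A B θ θ' i j := by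
  rw [L2.inner_def]
  refine integral_congr_ae ?_
  filter_upwards [hu, hu'] with s hs hs'
  rw [hs, hs', inner_RadjK_single_RadjK_single]

end Reachability

section Uspan

variable {n m : ℕ} {T θm θp : ℝ} {A : ℝ → Matrix (Fin n) (Fin n) ℝ}
  {B : ℝ → Matrix (Fin n) (Fin m) ℝ}

theorem mem_Uspan {θ : ℝ} (hθ : θ ∈ Icc θm θp) {i : Fin n} {u : L2 m T}
    (hu : ∀ᵐ s ∂(muT T), u s = RadjK T (A θ) (B θ) (EuclideanSpace.single i 1) s) :
    u ∈ Uspan T θm θp A B :=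
  subset_closure (Submodule.subset_span ⟨θ, hθ, i, hu⟩)

theorem inner_sub_eq_zero_of_mem_Uspan {u w x : L2 m T}
    (hw : ∀ θ ∈ Icc θm θp, RopFam T A B w θ = RopFam T A B u θ)
    (hx : x ∈ Uspan T θm θp A B) : ⟪x, w - u⟫ = 0 := by
  refine inner_eq_zero_of_mem_closure_span ?_ hx
  rintro y ⟨θ, hθ, i, hy⟩
  rw [inner_sub_right, inner_eq_RopK_apply hy, inner_eq_RopK_apply hy,
    show RopK T (A θ) (B θ) w = RopK T (A θ) (B θ) u from hw θ hθ, sub_self]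

theorem norm_le_norm_of_mem_Uspan {u w : L2 m T} (hu : u ∈ Uspan T θm θp A B)
    (hw : ∀ θ ∈ Icc θm θp, RopFam T A B w θ = RopFam T A B u θ) : ‖u‖ ≤ ‖w‖ :=
  norm_le_norm_of_inner_sub_eq_zero (inner_sub_eq_zero_of_mem_Uspan hw hu)

theorem eq_of_mem_Uspan_of_norm_le {u w : L2 m T} (hu : u ∈ Uspan T θm θp A B)
    (hw : ∀ θ ∈ Icc θm θp, RopFam T A B w θ = RopFam T A B u θ) (hmin : ‖w‖ ≤ ‖u‖) : w = u :=
  eq_of_inner_sub_eq_zero_of_norm_le (inner_sub_eq_zero_of_mem_Uspan hw hu) hmin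

end Uspan

theorem kernel_sections_isometry_general {n m : ℕ} (T θm θp : ℝ)
    (A : ℝ → Matrix (Fin n) (Fin n) ℝ) (B : ℝ → Matrix (Fin n) (Fin m) ℝ)
    (θt θh : ℝ) (hθt : θt ∈ Set.Icc θm θp) (hθh : θh ∈ Set.Icc θm θp) (i j : Fin n)
    (ui uj : L2 m T)
    (hui : ∀ᵐ s ∂(muT T), ui s = RadjK T (A θt) (B θt) (EuclideanSpace.single i 1) s)
    (huj : ∀ᵐ s ∂(muT T), uj s = RadjK T (A θh) (B θh) (EuclideanSpace.single j 1) s)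
    (w1 w2 : L2 m T)
    (hw1 : ∀ θ ∈ Set.Icc θm θp, RopFam T A B w1 θ = RopFam T A B ui θ)
    (hw1min : ∀ w : L2 m T,
      (∀ θ ∈ Set.Icc θm θp, RopFam T A B w θ = RopFam T A B ui θ) → ‖w1‖ ≤ ‖w‖)
    (hw2 : ∀ θ ∈ Set.Icc θm θp, RopFam T A B w2 θ = RopFam T A B uj θ)
    (hw2min : ∀ w : L2 m T,
      (∀ θ ∈ Set.Icc θm θp, RopFam T A B w θ = RopFam T A B uj θ) → ‖w2‖ ≤ ‖w‖) :
    (⟪w1, w2⟫ = Qfun T A B θt θh i j ∧ ⟪w1, w2⟫ = ⟪ui, uj⟫) ∧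
      ∀ u ∈ Uspan T θm θp A B, ∀ w : L2 m T,
        (∀ θ ∈ Set.Icc θm θp, RopFam T A B w θ = RopFam T A B u θ) → ‖u‖ ≤ ‖w‖ := by
  obtain rfl : w1 = ui :=
    eq_of_mem_Uspan_of_norm_le (mem_Uspan hθt hui) hw1 (hw1min ui fun _ _ => rfl)
  obtain rfl : w2 = uj :=
    eq_of_mem_Uspan_of_norm_le (mem_Uspan hθh huj) hw2 (hw2min uj fun _ _ => rfl)
  exact ⟨⟨inner_eq_Qfun_apply hui huj, rfl⟩, fun u hu w hw => norm_le_norm_of_mem_Uspan hu hw⟩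

/-- with `u_{i,θ̃}(s) = B(θ̃)ᵀ e^{A(θ̃)ᵀ(T−s)} eᵢ` we have
`⟨R u_{i,θ̃}, R u_{j,θ̂}⟩_{Im R} = ⟨eᵢ, Q(θ̃,θ̂) eⱼ⟩ = ⟨u_{i,θ̃}, u_{j,θ̂}⟩_{L²}`
(the `Im R` inner product being computed through the minimal-norm solutions `w₁, w₂`);
consequently `R` is isometric on the closed span `U` of these functions: every `u ∈ U`
is the minimal-norm solution over its own image. -/
theorem kernel_sections_isometry {n m : ℕ} (T θm θp : ℝ) (hT : 0 < T) (hθ : θm ≤ θp)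
    (A : ℝ → Matrix (Fin n) (Fin n) ℝ) (B : ℝ → Matrix (Fin n) (Fin m) ℝ)
    (hA : ∀ i j, Continuous fun θ => A θ i j) (hB : ∀ i j, Continuous fun θ => B θ i j)
    (θt θh : ℝ) (hθt : θt ∈ Set.Icc θm θp) (hθh : θh ∈ Set.Icc θm θp) (i j : Fin n)
    (ui uj : L2 m T)
    (hui : ∀ᵐ s ∂(muT T), ui s = RadjK T (A θt) (B θt) (EuclideanSpace.single i 1) s)
    (huj : ∀ᵐ s ∂(muT T), uj s = RadjK T (A θh) (B θh) (EuclideanSpace.single j 1) s)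
    (w1 w2 : L2 m T)
    (hw1 : ∀ θ ∈ Set.Icc θm θp, RopFam T A B w1 θ = RopFam T A B ui θ)
    (hw1min : ∀ w : L2 m T,
      (∀ θ ∈ Set.Icc θm θp, RopFam T A B w θ = RopFam T A B ui θ) → ‖w1‖ ≤ ‖w‖)
    (hw2 : ∀ θ ∈ Set.Icc θm θp, RopFam T A B w2 θ = RopFam T A B uj θ)
    (hw2min : ∀ w : L2 m T,
      (∀ θ ∈ Set.Icc θm θp, RopFam T A B w θ = RopFam T A B uj θ) → ‖w2‖ ≤ ‖w‖) :
    (⟪w1, w2⟫ = Qfun T A B θt θh i j ∧ ⟪w1, w2⟫ = ⟪ui, uj⟫) ∧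
      ∀ u ∈ Uspan T θm θp A B, ∀ w : L2 m T,
        (∀ θ ∈ Set.Icc θm θp, RopFam T A B w θ = RopFam T A B u θ) → ‖u‖ ≤ ‖w‖ :=
  kernel_sections_isometry_general T θm θp A B θt θh hθt hθh i j ui uj hui huj w1 w2 hw1 hw1min hw2
    hw2min
end
end

section
/- If f ∈ Im R and the fill distance Δ_N = sup_{θ∈P} min_{i≤N} |θ_i − θ| tends to 0, then the collocation solutions u_{∥N} converge in L²([0,T],ℝᵐ) to the minimal-norm solution R♯ f of R u = f. -/
open MeasureTheory Matrix Set NormedSpace Filter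
open scoped RealInnerProductSpace
noncomputable section

open scoped Topology ENNReal NNReal

/-! Write `u = R♯f` and `k_θ v = Bᵀ e^{Aᵀ(T - ·)} v ∈ L²`, so that `⟪w, k_θ v⟫ = ⟪(R w)(θ), v⟫`.
Minimality of `u` among the solutions of `R w = f` makes `u` orthogonal to every vector orthogonal
to all `k_θ v` (`θ ∈ P`), so `u` lies in the closed span of the kernel sections. A collocation
solution `u_N` has `‖u_N‖ ≤ ‖u‖` and `u_N - u ⊥ k_{θ_i} v` at the nodes; since `θ ↦ k_θ v` is
continuous into `L²` and the nodes fill `P`, `⟪u_N - u, k_θ v⟫ → 0` for all `θ ∈ P`, hence, the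
`u_N` being bounded, `⟪u_N - u, u⟫ → 0`. Finally `‖u_N - u‖² ≤ -2 ⟪u_N - u, u⟫`. -/

section Hilbert

variable {H : Type*} [NormedAddCommGroup H] [InnerProductSpace ℝ H]

theorem inner_eq_zero_of_forall_norm_le_norm_add_smul {u z : H}
    (h : ∀ t : ℝ, ‖u‖ ≤ ‖u + t • z‖) : ⟪u, z⟫ = 0 := by
  have hquad : ∀ t : ℝ, 0 ≤ 2 * t * ⟪u, z⟫ + t ^ 2 * ‖z‖ ^ 2 := fun t => by
    have hsq : ‖u + t • z‖ ^ 2 = ‖u‖ ^ 2 + 2 * t * ⟪u, z⟫ + t ^ 2 * ‖z‖ ^ 2 := by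
      rw [norm_add_sq_real, inner_smul_right, norm_smul, mul_pow, Real.norm_eq_abs, sq_abs]
      ring
    nlinarith [h t, norm_nonneg u]
  -- the quadratic in `t` is negative at `t = -⟪u, z⟫ / (‖z‖² + 1)` unless `⟪u, z⟫ = 0`
  have hneg := hquad (-⟪u, z⟫ / (‖z‖ ^ 2 + 1))
  have hpos : 0 < ‖z‖ ^ 2 + 1 := by positivity
  field_simp at hneg
  nlinarith [sq_nonneg ⟪u, z⟫, sq_nonneg ‖z‖]

theorem mem_topologicalClosure_span_of_forall_norm_le [CompleteSpace H] {S : Set H} {u : H}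
    (hmin : ∀ w, (∀ g ∈ S, ⟪w, g⟫ = ⟪u, g⟫) → ‖u‖ ≤ ‖w‖) :
    u ∈ (Submodule.span ℝ S).topologicalClosure := by
  rw [← Submodule.orthogonal_orthogonal_eq_closure]
  intro z hz
  rw [real_inner_comm]
  refine inner_eq_zero_of_forall_norm_le_norm_add_smul fun t => hmin _ fun g hg => ?_
  rw [inner_add_left, real_inner_smul_left, real_inner_comm g z,
    hz g (Submodule.subset_span hg), mul_zero, add_zero]

theorem tendsto_inner_of_mem_topologicalClosure_span {ι : Type*} {l : Filter ι} {x : ι → H}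
    {C : ℝ} (hC : ∀ j, ‖x j‖ ≤ C) {S : Set H}
    (hS : ∀ g ∈ S, Tendsto (fun j => ⟪x j, g⟫) l (𝓝 0)) {v : H}
    (hv : v ∈ (Submodule.span ℝ S).topologicalClosure) :
    Tendsto (fun j => ⟪x j, v⟫) l (𝓝 0) := by
  have hequi : Equicontinuous fun j (w : H) => ⟪x j, w⟫ := by
    refine Metric.equicontinuous_of_continuity_modulus (C * ·)
      (by simpa using (continuous_const_mul C).tendsto 0) _ fun a b j => ?_
    rw [dist_eq_norm, dist_eq_norm, ← inner_sub_right, Real.norm_eq_abs]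
    exact (abs_real_inner_le_norm _ _).trans (by gcongr; exact hC j)
  have hclosed : IsClosed {w : H | Tendsto (fun j => ⟪x j, w⟫) l (𝓝 0)} :=
    hequi.isClosed_setOfPred_tendsto (f := fun _ => 0) continuous_const
  have hspan : (Submodule.span ℝ S : Set H) ⊆ {w | Tendsto (fun j => ⟪x j, w⟫) l (𝓝 0)} := by
    intro w hw
    induction hw using Submodule.span_induction with
    | mem g hg => exact hS g hg
    | zero => simpa using tendsto_const_nhds
    | add g h _ _ hg hh => simpa [inner_add_right] using hg.add hh
    | smul c g _ hg => simpa [real_inner_smul_right] using hg.const_mul c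
  rw [← SetLike.mem_coe, Submodule.topologicalClosure_coe] at hv
  exact closure_minimal hspan hclosed hv

theorem tendsto_inner_of_forall_exists_dist_lt {X ι : Type*} [PseudoMetricSpace X]
    {κ : ι → Type*} {l : Filter ι} {g : X → H} {θ₀ : X} (hg : ContinuousAt g θ₀) {x : ι → H}
    {C : ℝ} (hC : ∀ j, ‖x j‖ ≤ C)
    {θs : ∀ j, κ j → X} (hnodes : ∀ j k, ⟪x j, g (θs j k)⟫ = 0)
    (hnear : ∀ ε > 0, ∀ᶠ j in l, ∃ k, dist (θs j k) θ₀ < ε) :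
    Tendsto (fun j => ⟪x j, g θ₀⟫) l (𝓝 0) := by
  refine Metric.tendsto_nhds.mpr fun ε hε => ?_
  obtain ⟨δ, hδ, hgδ⟩ := Metric.continuousAt_iff.mp hg (ε / (|C| + 1)) (by positivity)
  filter_upwards [hnear δ hδ] with j ⟨k, hk⟩
  have hshift : ⟪x j, g θ₀⟫ = ⟪x j, g θ₀ - g (θs j k)⟫ := by
    rw [inner_sub_right, hnodes, sub_zero]
  rw [dist_zero_right, hshift, Real.norm_eq_abs]
  calc |⟪x j, g θ₀ - g (θs j k)⟫| ≤ ‖x j‖ * ‖g θ₀ - g (θs j k)‖ := abs_real_inner_le_norm _ _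
    _ ≤ |C| * (ε / (|C| + 1)) := by
        gcongr
        · exact (hC j).trans (le_abs_self C)
        · rw [← dist_eq_norm, dist_comm]
          exact (hgδ hk).le
    _ < ε := by
        rw [mul_div_assoc', div_lt_iff₀ (by positivity)]
        nlinarith

theorem tendsto_of_norm_le_of_tendsto_inner_sub {ι : Type*} {l : Filter ι} {x : ι → H} {u : H}
    (hnorm : ∀ j, ‖x j‖ ≤ ‖u‖) (hweak : Tendsto (fun j => ⟪x j - u, u⟫) l (𝓝 0)) :
    Tendsto x l (𝓝 u) := by
  have hsq : ∀ j, ‖x j - u‖ ^ 2 ≤ -2 * ⟪x j - u, u⟫ := fun j => by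
    have hexp : ‖x j - u‖ ^ 2 = ‖x j‖ ^ 2 - ‖u‖ ^ 2 - 2 * ⟪x j - u, u⟫ := by
      rw [norm_sub_sq_real, inner_sub_left, real_inner_self_eq_norm_sq]
      ring
    nlinarith [hnorm j, norm_nonneg (x j)]
  have hsq_lim : Tendsto (fun j => ‖x j - u‖ ^ 2) l (𝓝 0) :=
    squeeze_zero (fun j => sq_nonneg _) hsq (by simpa using hweak.const_mul (-2))
  rw [tendsto_iff_norm_sub_tendsto_zero]
  simpa [Real.sqrt_sq (norm_nonneg _)] using hsq_lim.sqrt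

end Hilbert

theorem MeasureTheory.Integrable.clm_apply_of_memLp_top {α F G : Type*} [MeasurableSpace α]
    {μ : Measure α} [NormedAddCommGroup F] [NormedSpace ℝ F] [NormedAddCommGroup G]
    [NormedSpace ℝ G] {L : α → F →L[ℝ] G} {u : α → F} (hL : MemLp L ∞ μ)
    (hu : Integrable u μ) : Integrable (fun a => L a (u a)) μ := by
  rw [← memLp_one_iff_integrable] at hu ⊢
  refine MemLp.of_bilin (r := 1) (fun L x => L x) 1 hL hu
    (isBoundedBilinearMap_apply.continuous.comp_aestronglyMeasurable (hL.1.prodMk hu.1))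
    (Eventually.of_forall fun a => ?_)
  simpa using (L a).le_opNNNorm (u a)

section Measure

variable {α E : Type*} [MeasurableSpace α] [TopologicalSpace α] [OpensMeasurableSpace α]
  [NormedAddCommGroup E] {μ : Measure α} {K : Set α}

theorem ContinuousOn.memLp_restrict [SecondCountableTopologyEither α E]
    [IsFiniteMeasure (μ.restrict K)] (hK : IsCompact K) (hKm : MeasurableSet K) {f : α → E}
    (hf : ContinuousOn f K) (p : ℝ≥0∞) : MemLp f p (μ.restrict K) := by
  obtain ⟨C, hC⟩ := hK.exists_bound_of_continuousOn hf
  exact (memLp_top_of_bound (hf.aestronglyMeasurable hKm) C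
    ((ae_restrict_iff' hKm).mpr (Eventually.of_forall hC))).mono_exponent le_top

theorem continuous_memLp_toLp_restrict [SecondCountableTopologyEither α E]
    [IsFiniteMeasure (μ.restrict K)] (hK : IsCompact K) (hKm : MeasurableSet K)
    {p : ℝ≥0∞} [Fact (1 ≤ p)] {X : Type*} [TopologicalSpace X] {F : X → α → E}
    (hF : Continuous (Function.uncurry F)) :
    Continuous fun x =>
      ((hF.uncurry_left x).continuousOn.memLp_restrict (μ := μ) hK hKm p).toLp (F x) := by
  have hmem : ∀ x, MemLp (F x) p (μ.restrict K) := fun x =>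
    (hF.uncurry_left x).continuousOn.memLp_restrict hK hKm p
  refine continuous_iff_continuousAt.mpr fun x₀ => Metric.tendsto_nhds.mpr fun ε hε => ?_
  set c : ℝ := (measureUnivNNReal (μ.restrict K) : ℝ) ^ p.toReal⁻¹
  have hc : 0 ≤ c := by positivity
  obtain ⟨V, hV, hFV⟩ := hK.mem_uniformity_of_prod hF.continuousOn (mem_univ x₀)
    (Metric.dist_mem_uniformity (show 0 < ε / (c + 1) by positivity))
  rw [nhdsWithin_univ] at hV
  filter_upwards [hV] with x hx
  rw [dist_eq_norm, ← (hmem x).toLp_sub (hmem x₀)]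
  refine (Lp.norm_le_of_ae_bound (C := ε / (c + 1)) (by positivity) ?_).trans_lt ?_
  · filter_upwards [((hmem x).sub (hmem x₀)).coeFn_toLp, ae_restrict_mem hKm] with s hs hsK
    rw [hs, Pi.sub_apply, ← dist_eq_norm]
    exact (hFV x hx s hsK).le
  · change c * (ε / (c + 1)) < ε
    rw [mul_div_assoc', div_lt_iff₀ (by positivity)]
    nlinarith

end Measure

section Reachability

attribute [local instance] Matrix.linftyOpNormedRing Matrix.linftyOpNormedAlgebra

variable {n m : ℕ}

instance isFiniteMeasure_muT (T : ℝ) : IsFiniteMeasure (muT T) := by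
  unfold muT
  infer_instance

def euclideanMatrixCLM {ι κ : Type*} [Fintype ι] [Fintype κ] [DecidableEq κ] :
    Matrix ι κ ℝ →L[ℝ] (EuclideanSpace ℝ κ →L[ℝ] EuclideanSpace ℝ ι) :=
  LinearMap.toContinuousLinearMap
    (LinearMap.toContinuousLinearMap.toLinearMap ∘ₗ Matrix.toEuclideanLin.toLinearMap)

theorem inner_euclideanMatrixCLM_conjTranspose {ι κ : Type*} [Fintype ι] [DecidableEq ι]
    [Fintype κ] [DecidableEq κ] (M : Matrix ι κ ℝ) (x : EuclideanSpace ℝ κ)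
    (v : EuclideanSpace ℝ ι) :
    ⟪x, euclideanMatrixCLM Mᴴ v⟫ = ⟪euclideanMatrixCLM M x, v⟫ := by
  change ⟪x, Matrix.toEuclideanLin Mᴴ v⟫ = ⟪Matrix.toEuclideanLin M x, v⟫
  rw [Matrix.toEuclideanLin_conjTranspose_eq_adjoint, LinearMap.adjoint_inner_right]

theorem radjK_eq_euclideanMatrixCLM (T : ℝ) (A : Matrix (Fin n) (Fin n) ℝ)
    (B : Matrix (Fin n) (Fin m) ℝ) (v : EuclideanSpace ℝ (Fin n)) (s : ℝ) :
    RadjK T A B v s = euclideanMatrixCLM (NormedSpace.exp ((T - s) • A) * B)ᴴ v := by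
  rw [conjTranspose_eq_transpose_of_trivial, transpose_mul, ← Matrix.exp_transpose,
    transpose_smul]
  rfl

theorem continuous_radjK {X : Type*} [TopologicalSpace X] {A : X → Matrix (Fin n) (Fin n) ℝ}
    {B : X → Matrix (Fin n) (Fin m) ℝ} (hA : Continuous A) (hB : Continuous B) (T : ℝ)
    (v : EuclideanSpace ℝ (Fin n)) :
    Continuous (Function.uncurry fun x s => RadjK T (A x) (B x) v s) := by
  have hexp : Continuous fun p : X × ℝ => NormedSpace.exp ((T - p.2) • (A p.1)ᵀ) :=
    NormedSpace.exp_continuous.comp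
      ((continuous_const.sub continuous_snd).smul (hA.comp continuous_fst).matrix_transpose)
  exact (PiLp.continuous_toLp 2 _).comp
    (((hB.comp continuous_fst).matrix_transpose.matrix_mul hexp).matrix_mulVec continuous_const)

theorem continuous_radjK_right (T : ℝ) (A : Matrix (Fin n) (Fin n) ℝ)
    (B : Matrix (Fin n) (Fin m) ℝ) (v : EuclideanSpace ℝ (Fin n)) : Continuous (RadjK T A B v) :=
  (continuous_radjK (X := Unit) continuous_const continuous_const T v).uncurry_left ()

def kernelSection (T : ℝ) (A : Matrix (Fin n) (Fin n) ℝ) (B : Matrix (Fin n) (Fin m) ℝ)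
    (v : EuclideanSpace ℝ (Fin n)) : L2 m T :=
  ((continuous_radjK_right T A B v).continuousOn.memLp_restrict isCompact_Icc
    measurableSet_Icc 2).toLp (RadjK T A B v)

theorem continuous_kernelSection {A : ℝ → Matrix (Fin n) (Fin n) ℝ}
    {B : ℝ → Matrix (Fin n) (Fin m) ℝ} (hA : Continuous A) (hB : Continuous B) (T : ℝ)
    (v : EuclideanSpace ℝ (Fin n)) : Continuous fun θ => kernelSection T (A θ) (B θ) v :=
  continuous_memLp_toLp_restrict isCompact_Icc measurableSet_Icc (continuous_radjK hA hB T v)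

theorem coeFn_kernelSection (T : ℝ) (A : Matrix (Fin n) (Fin n) ℝ)
    (B : Matrix (Fin n) (Fin m) ℝ) (v : EuclideanSpace ℝ (Fin n)) :
    kernelSection T A B v =ᵐ[muT T] RadjK T A B v :=
  MemLp.coeFn_toLp _

theorem inner_kernelSection (T : ℝ) (A : Matrix (Fin n) (Fin n) ℝ)
    (B : Matrix (Fin n) (Fin m) ℝ) (u : L2 m T) (v : EuclideanSpace ℝ (Fin n)) :
    ⟪u, kernelSection T A B v⟫ = ⟪RopK T A B u, v⟫ := by
  have hN : Continuous fun s : ℝ => NormedSpace.exp ((T - s) • A) * B :=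
    (NormedSpace.exp_continuous.comp
      ((continuous_const.sub continuous_id).smul continuous_const)).matrix_mul continuous_const
  have hint : Integrable
      (fun s => euclideanMatrixCLM (NormedSpace.exp ((T - s) • A) * B) (u s)) (muT T) :=
    Integrable.clm_apply_of_memLp_top
      ((euclideanMatrixCLM.continuous.comp hN).continuousOn.memLp_restrict isCompact_Icc
        measurableSet_Icc ∞)
      ((Lp.memLp u).integrable one_le_two)
  calc ⟪u, kernelSection T A B v⟫ = ∫ s, ⟪u s, RadjK T A B v s⟫ ∂muT T := by
        rw [L2.inner_def]
        refine integral_congr_ae ?_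
        filter_upwards [coeFn_kernelSection T A B v] with s hs
        rw [hs]
    _ = ∫ s, ⟪v, euclideanMatrixCLM (NormedSpace.exp ((T - s) • A) * B) (u s)⟫ ∂muT T := by
        simp_rw [radjK_eq_euclideanMatrixCLM, inner_euclideanMatrixCLM_conjTranspose,
          real_inner_comm v]
    _ = ⟪RopK T A B u, v⟫ := by
        rw [integral_inner hint, real_inner_comm]
        rfl

end Reachability

theorem collocation_convergence_general {n m : ℕ} (T θm θp : ℝ)
    (A : ℝ → Matrix (Fin n) (Fin n) ℝ) (B : ℝ → Matrix (Fin n) (Fin m) ℝ)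
    (hA : ∀ i j, Continuous fun θ => A θ i j) (hB : ∀ i j, Continuous fun θ => B θ i j)
    (uf : L2 m T)
    (hufmin : ∀ w : L2 m T,
      (∀ θ ∈ Set.Icc θm θp, RopFam T A B w θ = RopFam T A B uf θ) → ‖uf‖ ≤ ‖w‖)
    (NN : ℕ → ℕ) (θs : ∀ j, Fin (NN j) → ℝ)
    (hfill : ∀ ε > (0:ℝ), ∀ᶠ j in Filter.atTop,
      ∀ θ ∈ Set.Icc θm θp, ∃ k, |θs j k - θ| < ε)
    (upar : ℕ → L2 m T)
    (hupar : ∀ j k, RopFam T A B (upar j) (θs j k) = RopFam T A B uf (θs j k))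
    (huparmin : ∀ j, ∀ w : L2 m T,
      (∀ k, RopFam T A B w (θs j k) = RopFam T A B uf (θs j k)) → ‖upar j‖ ≤ ‖w‖) :
    Filter.Tendsto (fun j => ‖upar j - uf‖) Filter.atTop (nhds 0) := by
  have hAc : Continuous A := continuous_pi fun i => continuous_pi (hA i)
  have hBc : Continuous B := continuous_pi fun i => continuous_pi (hB i)
  set S : Set (L2 m T) := {g | ∃ θ ∈ Set.Icc θm θp, ∃ v, g = kernelSection T (A θ) (B θ) v}
  have hmin : ∀ w, (∀ g ∈ S, ⟪w, g⟫ = ⟪uf, g⟫) → ‖uf‖ ≤ ‖w‖ := fun w hw =>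
    hufmin w fun θ hθ => ext_inner_right ℝ fun v => by
      have := hw _ ⟨θ, hθ, v, rfl⟩
      rwa [inner_kernelSection, inner_kernelSection] at this
  have hnorm : ∀ j, ‖upar j‖ ≤ ‖uf‖ := fun j => huparmin j uf fun _ => rfl
  have hbdd : ∀ j, ‖upar j - uf‖ ≤ 2 * ‖uf‖ := fun j =>
    (norm_sub_le _ _).trans (by linarith [hnorm j])
  have hS : ∀ g ∈ S, Tendsto (fun j => ⟪upar j - uf, g⟫) atTop (𝓝 0) := by
    rintro _ ⟨θ, hθ, v, rfl⟩
    refine tendsto_inner_of_forall_exists_dist_lt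
      (g := fun θ => kernelSection T (A θ) (B θ) v) ?_ hbdd (θs := θs) (fun j k => ?_)
      fun ε hε => (hfill ε hε).mono fun j hj => by simpa only [Real.dist_eq] using hj θ hθ
    · exact (continuous_kernelSection hAc hBc T v).continuousAt
    · rw [inner_sub_left, inner_kernelSection, inner_kernelSection]
      exact sub_eq_zero.mpr (congrArg (⟪·, v⟫) (hupar j k))
  rw [← tendsto_iff_norm_sub_tendsto_zero]
  exact tendsto_of_norm_le_of_tendsto_inner_sub hnorm
    (tendsto_inner_of_mem_topologicalClosure_span hbdd hS
      (mem_topologicalClosure_span_of_forall_norm_le hmin))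

/-- if `f ∈ Im R` and the fill distance `Δ_N → 0`, then the minimal-norm
collocation solutions `u_{∥N}` converge in `L²([0,T],ℝᵐ)` to the minimal-norm solution
`R♯f` of `Ru = f` (here `f = R uf` with `uf = R♯f`). -/
theorem collocation_convergence {n m : ℕ} (T θm θp : ℝ) (hT : 0 < T) (hθ : θm ≤ θp)
    (A : ℝ → Matrix (Fin n) (Fin n) ℝ) (B : ℝ → Matrix (Fin n) (Fin m) ℝ)
    (hA : ∀ i j, Continuous fun θ => A θ i j) (hB : ∀ i j, Continuous fun θ => B θ i j)
    (uf : L2 m T)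
    (hufmin : ∀ w : L2 m T,
      (∀ θ ∈ Set.Icc θm θp, RopFam T A B w θ = RopFam T A B uf θ) → ‖uf‖ ≤ ‖w‖)
    (NN : ℕ → ℕ) (θs : ∀ j, Fin (NN j) → ℝ)
    (hθsP : ∀ j k, θs j k ∈ Set.Icc θm θp)
    (hfill : ∀ ε > (0:ℝ), ∀ᶠ j in Filter.atTop,
      ∀ θ ∈ Set.Icc θm θp, ∃ k, |θs j k - θ| < ε)
    (upar : ℕ → L2 m T)
    (hupar : ∀ j k, RopFam T A B (upar j) (θs j k) = RopFam T A B uf (θs j k))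
    (huparmin : ∀ j, ∀ w : L2 m T,
      (∀ k, RopFam T A B w (θs j k) = RopFam T A B uf (θs j k)) → ‖upar j‖ ≤ ‖w‖) :
    Filter.Tendsto (fun j => ‖upar j - uf‖) Filter.atTop (nhds 0) :=
  collocation_convergence_general T θm θp A B hA hB uf hufmin NN θs hfill upar hupar huparmin
end
end
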